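/- arXiv:1602.00810 — 3 statements merged into one kernel-verified Lean document; each statement's English description precedes it below -/
import Mathlib

section
/- Let F be a field, A ∈ F^{n×n}, u, v ∈ F^n. Let f^{A,v} be the monic polynomial of least degree with f^{A,v}(A)v = 0, with vector residue ρ⃗^{A,v}(λ) ∈ F[λ]^n, and let f_u^{A,v} be the minimal generating polynomial of the sequence (u^T A^i v)_{i≥0}, with residue ρ_u^{A,v}(λ) ∈ F[λ]. Then the polynomial identity (u^T ρ⃗^{A,v}(λ)) · f_u^{A,v}(λ) = ρ_u^{A,v}(λ) · f^{A,v}(λ) holds in F[λ]. -/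
open Matrix

/-- `f` annihilates the sequence `a`: writing `f = Σ_{j=0}^m f_j λ^j` with
`m = deg f`, we have `Σ_{j=0}^m f_j a_{i+j} = 0` for all `i ≥ 0`. -/
def AnnihilatesSeq {F : Type*} [Field F] (f : Polynomial F) (a : ℕ → F) : Prop :=
  ∀ i : ℕ, ∑ j ∈ Finset.range (f.natDegree + 1), f.coeff j * a (i + j) = 0

/-- `f` is the minimal generating polynomial of the sequence `a`: the monic
polynomial of least degree annihilating `a`. -/
def IsMinGenPoly {F : Type*} [Field F] (f : Polynomial F) (a : ℕ → F) : Prop :=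
  f.Monic ∧ AnnihilatesSeq f a ∧
    ∀ g : Polynomial F, g.Monic → AnnihilatesSeq g a → f.natDegree ≤ g.natDegree

/-- The residue of a linearly generated sequence `a` with respect to its
generator `f` of degree `m`:
`ρ(λ) = Σ_{k=0}^{m−1} ( Σ_{i=0}^{m−1−k} f_{k+1+i} a_i ) λ^k`. -/
noncomputable def seqResidue {F : Type*} [Field F] (f : Polynomial F) (a : ℕ → F) :
    Polynomial F :=
  ∑ k ∈ Finset.range f.natDegree,
    Polynomial.C (∑ i ∈ Finset.range (f.natDegree - k), f.coeff (k + 1 + i) * a i) *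
      Polynomial.X ^ k

/-- `f` is the minimal generating polynomial of the Krylov sequence `(A^i v)_{i≥0}`,
i.e. the monic polynomial of least degree with `f(A)v = 0`. -/
def IsMinKrylovPoly {F : Type*} [Field F] {n : ℕ} (A : Matrix (Fin n) (Fin n) F)
    (v : Fin n → F) (f : Polynomial F) : Prop :=
  f.Monic ∧ (Polynomial.aeval A f).mulVec v = 0 ∧
    ∀ g : Polynomial F, g.Monic → (Polynomial.aeval A g).mulVec v = 0 →
      f.natDegree ≤ g.natDegree

/-- The vector residue `ρ⃗^{A,v}(λ) ∈ F[λ]^n` of the Krylov sequence with respect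
to a generator `f` of degree `m`, whose coefficient of `λ^k` is
`Σ_{i=0}^{m−1−k} g_{k+1+i} A^i v`. -/
noncomputable def vecResidue {F : Type*} [Field F] {n : ℕ} (A : Matrix (Fin n) (Fin n) F)
    (v : Fin n → F) (f : Polynomial F) : Fin n → Polynomial F :=
  fun j => ∑ k ∈ Finset.range f.natDegree,
    Polynomial.C (∑ i ∈ Finset.range (f.natDegree - k),
      f.coeff (k + 1 + i) * (A ^ i).mulVec v j) * Polynomial.X ^ k




namespace VRAux

open Polynomial Matrix

variable {F : Type*} [Field F]

lemma seqResidue_coeff (f : Polynomial F) (a : ℕ → F) (l : ℕ) :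
    (seqResidue f a).coeff l =
      if l < f.natDegree then
        ∑ i ∈ Finset.range (f.natDegree - l), f.coeff (l + 1 + i) * a i
      else 0 := by
  rw [seqResidue, Polynomial.finset_sum_coeff]
  simp only [Polynomial.coeff_C_mul, Polynomial.coeff_X_pow, mul_ite, mul_one, mul_zero]
  rw [Finset.sum_ite_eq (Finset.range f.natDegree) l]
  simp [Finset.mem_range]

lemma vecResidue_coeff {n : ℕ} (A : Matrix (Fin n) (Fin n) F) (v : Fin n → F)
    (f : Polynomial F) (j : Fin n) (l : ℕ) :
    (vecResidue A v f j).coeff l =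
      if l < f.natDegree then
        ∑ i ∈ Finset.range (f.natDegree - l), f.coeff (l + 1 + i) * (A ^ i).mulVec v j
      else 0 := by
  rw [vecResidue, Polynomial.finset_sum_coeff]
  simp only [Polynomial.coeff_C_mul, Polynomial.coeff_X_pow, mul_ite, mul_one, mul_zero]
  rw [Finset.sum_ite_eq (Finset.range f.natDegree) l]
  simp [Finset.mem_range]

lemma natDegree_X_mul_seqResidue_le (f : Polynomial F) (a : ℕ → F) :
    (Polynomial.X * seqResidue f a).natDegree ≤ f.natDegree := by
  rw [Polynomial.natDegree_le_iff_coeff_eq_zero]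
  intro N hN
  obtain ⟨M, rfl⟩ : ∃ M, N = M + 1 := ⟨N - 1, by omega⟩
  rw [Polynomial.coeff_X_mul, seqResidue_coeff, if_neg (by omega)]

lemma natDegree_reflect_le {f : Polynomial F} {N : ℕ} (h : f.natDegree ≤ N) :
    (f.reflect N).natDegree ≤ N := by
  rw [Polynomial.natDegree_le_iff_coeff_eq_zero]
  intro M hM
  rw [Polynomial.coeff_reflect, Polynomial.revAt_eq_self_of_lt hM]
  exact Polynomial.coeff_eq_zero_of_natDegree_lt (lt_of_le_of_lt h hM)

lemma reflect_reflect (N : ℕ) (f : Polynomial F) : (f.reflect N).reflect N = f := by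
  ext i
  simp [Polynomial.coeff_reflect]

/-- Key identity in power series: if `f` annihilates `a`, then the reversal of `f`
times the generating series of `a` equals the reversal of `X * seqResidue f a`. -/
lemma reflect_mul_mk (f : Polynomial F) (a : ℕ → F) (hf : AnnihilatesSeq f a) :
    ((f.reflect f.natDegree : Polynomial F) : PowerSeries F) * PowerSeries.mk a
      = (((Polynomial.X * seqResidue f a).reflect f.natDegree : Polynomial F) :
          PowerSeries F) := by
  set m := f.natDegree with hm
  ext N
  rw [PowerSeries.coeff_mul, Finset.Nat.sum_antidiagonal_eq_sum_range_succ_mk]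
  simp only [Polynomial.coeff_coe, Polynomial.coeff_reflect, PowerSeries.coeff_mk]
  by_cases hN : N < m
  · -- low coefficients: both sides equal residue coefficients
    rw [Polynomial.revAt_le (le_of_lt hN)]
    have h1 : m - N = (m - N - 1) + 1 := by omega
    rw [h1, Polynomial.coeff_X_mul, seqResidue_coeff, if_pos (by omega)]
    have h2 : m - (m - N - 1) = N + 1 := by omega
    rw [h2, ← Finset.sum_range_reflect]
    refine Finset.sum_congr rfl fun j hj => ?_
    rw [Finset.mem_range] at hj
    have e0 : N + 1 - 1 - j = N - j := by omega
    rw [e0, Polynomial.revAt_le (by omega : N - j ≤ m)]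
    have e1 : m - (N - j) = m - N - 1 + 1 + j := by omega
    have e2 : N - (N - j) = j := by omega
    rw [e1, e2]
  · -- high coefficients: both sides vanish
    have hRHS : (Polynomial.X * seqResidue f a).coeff ((Polynomial.revAt m) N) = 0 := by
      rcases eq_or_lt_of_le (not_lt.mp hN) with h | h
      · rw [← h, Polynomial.revAt_le (le_refl m), Nat.sub_self]
        simp [Polynomial.mul_coeff_zero]
      · rw [Polynomial.revAt_eq_self_of_lt h]
        exact Polynomial.coeff_eq_zero_of_natDegree_lt
          (lt_of_le_of_lt (natDegree_X_mul_seqResidue_le f a) h)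
    rw [hRHS]
    rw [← Finset.sum_subset (Finset.range_subset_range.mpr (by omega : m + 1 ≤ N + 1))
      (fun x hx hx' => ?_)]
    · rw [← Finset.sum_range_reflect]
      rw [← hf (N - m)]
      refine Finset.sum_congr rfl fun j hj => ?_
      rw [Finset.mem_range] at hj
      have e0 : m + 1 - 1 - j = m - j := by omega
      rw [e0, Polynomial.revAt_le (by omega : m - j ≤ m)]
      have e1 : m - (m - j) = j := by omega
      have e2 : N - (m - j) = N - m + j := by omega
      rw [e1, e2]
    · rw [Finset.mem_range] at hx hx'
      have hxm : m < x := by omega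
      rw [Polynomial.revAt_eq_self_of_lt hxm,
        Polynomial.coeff_eq_zero_of_natDegree_lt (by omega : f.natDegree < x), zero_mul]

/-- The central abstract identity: for any two annihilators of a sequence,
the cross products of residues and annihilators agree. -/
lemma seqResidue_mul_comm (f g : Polynomial F) (a : ℕ → F)
    (hf : AnnihilatesSeq f a) (hg : AnnihilatesSeq g a) :
    seqResidue f a * g = seqResidue g a * f := by
  have hfg : (Polynomial.X * seqResidue f a).reflect f.natDegree *
        g.reflect g.natDegree
      = (Polynomial.X * seqResidue g a).reflect g.natDegree *
        f.reflect f.natDegree := by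
    rw [← Polynomial.coe_inj, Polynomial.coe_mul, Polynomial.coe_mul,
      ← reflect_mul_mk f a hf, ← reflect_mul_mk g a hg]
    ring
  have key := congrArg (Polynomial.reflect (f.natDegree + g.natDegree)) hfg
  rw [Polynomial.reflect_mul _ _ (natDegree_reflect_le (natDegree_X_mul_seqResidue_le f a))
        (natDegree_reflect_le (le_refl g.natDegree)),
      reflect_reflect, reflect_reflect] at key
  rw [show f.natDegree + g.natDegree = g.natDegree + f.natDegree from add_comm _ _] at key
  rw [Polynomial.reflect_mul _ _ (natDegree_reflect_le (natDegree_X_mul_seqResidue_le g a))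
        (natDegree_reflect_le (le_refl f.natDegree)),
      reflect_reflect, reflect_reflect] at key
  have hX : (Polynomial.X : Polynomial F) ≠ 0 := Polynomial.X_ne_zero
  apply mul_left_cancel₀ hX
  rw [← mul_assoc, ← mul_assoc, key]

lemma dot_sum {n : ℕ} {ι : Type*} (u : Fin n → F) (s : Finset ι) (w : ι → Fin n → F) :
    u ⬝ᵥ (∑ j ∈ s, w j) = ∑ j ∈ s, u ⬝ᵥ w j := by
  simp only [dotProduct, Finset.sum_apply, Finset.mul_sum]
  exact Finset.sum_comm

lemma sum_mulVec' {n : ℕ} {ι : Type*} (s : Finset ι) (M : ι → Matrix (Fin n) (Fin n) F)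
    (v : Fin n → F) : (∑ j ∈ s, M j).mulVec v = ∑ j ∈ s, (M j).mulVec v := by
  ext k
  simp only [Matrix.mulVec, dotProduct, Matrix.sum_apply, Finset.sum_apply, Finset.sum_mul]
  exact Finset.sum_comm

lemma mulVec_sum' {n : ℕ} {ι : Type*} (M : Matrix (Fin n) (Fin n) F) (s : Finset ι)
    (w : ι → Fin n → F) : M.mulVec (∑ j ∈ s, w j) = ∑ j ∈ s, M.mulVec (w j) := by
  ext k
  simp only [Matrix.mulVec, dotProduct, Finset.sum_apply, Finset.mul_sum]
  exact Finset.sum_comm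

lemma krylov_annihilates {n : ℕ} (A : Matrix (Fin n) (Fin n) F) (u v : Fin n → F)
    (f : Polynomial F) (hf : (Polynomial.aeval A f).mulVec v = 0) :
    AnnihilatesSeq f (fun i => u ⬝ᵥ (A ^ i).mulVec v) := by
  intro i
  have h0 : u ⬝ᵥ (A ^ i).mulVec ((Polynomial.aeval A f).mulVec v) = 0 := by
    rw [hf, Matrix.mulVec_zero, dotProduct_zero]
  rw [Polynomial.aeval_eq_sum_range, sum_mulVec'] at h0
  simp only [Matrix.smul_mulVec] at h0
  rw [mulVec_sum'] at h0
  simp only [Matrix.mulVec_smul] at h0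
  rw [dot_sum] at h0
  simp only [dotProduct_smul, smul_eq_mul] at h0
  rw [← h0]
  refine Finset.sum_congr rfl fun j hj => ?_
  simp only [pow_add, ← Matrix.mulVec_mulVec]

lemma dot_vecResidue_eq {n : ℕ} (A : Matrix (Fin n) (Fin n) F) (u v : Fin n → F)
    (f : Polynomial F) :
    (∑ j, Polynomial.C (u j) * vecResidue A v f j)
      = seqResidue f (fun i => u ⬝ᵥ (A ^ i).mulVec v) := by
  apply Polynomial.ext
  intro l
  rw [Polynomial.finset_sum_coeff, seqResidue_coeff]
  simp only [Polynomial.coeff_C_mul, vecResidue_coeff, mul_ite, mul_zero]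
  split_ifs with h
  · simp only [dotProduct, Finset.mul_sum]
    rw [Finset.sum_comm]
    exact Finset.sum_congr rfl fun i _ => Finset.sum_congr rfl fun x _ => by ring
  · simp

end VRAux

/-- The polynomial identity `(u^T ρ⃗^{A,v}(λ)) · f_u^{A,v}(λ) = ρ_u^{A,v}(λ) · f^{A,v}(λ)`
holds in `F[λ]`. -/
theorem vecResidue_dot_mul_eq (F : Type*) [Field F] (n : ℕ)
    (A : Matrix (Fin n) (Fin n) F) (u v : Fin n → F) (fv fs : Polynomial F)
    (hfv : IsMinKrylovPoly A v fv)
    (hfs : IsMinGenPoly fs fun i => u ⬝ᵥ (A ^ i).mulVec v) :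
    (∑ j, Polynomial.C (u j) * vecResidue A v fv j) * fs =
      seqResidue fs (fun i => u ⬝ᵥ (A ^ i).mulVec v) * fv := by
  rw [VRAux.dot_vecResidue_eq A u v fv]
  exact VRAux.seqResidue_mul_comm fv fs _ (VRAux.krylov_annihilates A u v fv hfv.2.1) hfs.2.1
end

section
/- Let F be a field, A ∈ F^{n×n}, u, v ∈ F^n, and let f^A be the minimal polynomial of A. Let f_u^{A,v} be the minimal generating polynomial of the sequence (u^T A^i v)_{i≥0} and ρ_u^{A,v} its residue. Then for every r ∈ F with f^A(r) ≠ 0, the matrix r I_n − A is invertible, f_u^{A,v}(r) ≠ 0, and u^T (r I_n − A)^{−1} v = ρ_u^{A,v}(r) / f_u^{A,v}(r). -/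
open Matrix

/-!
Write `φ(M) = uᵀ M v`. A polynomial `g` annihilates the sequence `φ(Aⁱ)` iff `φ(p(A) g(A)) = 0`
for every polynomial `p`, so the annihilators form an ideal and the minimal generating polynomial
`f` divides every annihilator, in particular `f^A`; hence `f(r) ≠ 0`. As `f^A(A) = 0` and
`f^A(r) ≠ 0`, the inverse of `rI − A` is `q(A)` for a polynomial `q`. Writing
`f(X) − f(r) = (X − r) D(X)` gives `f(r) q = q f + (r − X) q D`; applying `φ` after evaluating at
`A` kills `q f` and turns `(r − X) q` into `1`, so `f(r) φ((rI − A)⁻¹) = φ(D(A))`, and `φ(D(A))`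
is `ρ(r)` after re-indexing the double sum.
-/

open Polynomial Finset

namespace Polynomial

variable {R : Type*} [CommRing R]

/-- The quotient `(f - f(r)) / (X - r)`, written out so that it can be evaluated term by term. -/
noncomputable def divDiff (f : R[X]) (r : R) : R[X] :=
  ∑ m ∈ range f.natDegree, C (f.coeff (m + 1)) * ∑ k ∈ range (m + 1), C r ^ k * X ^ (m - k)

theorem X_sub_C_mul_divDiff (f : R[X]) (r : R) : (X - C r) * f.divDiff r = f - C (f.eval r) := by
  have hf : f - C (f.eval r) =
      ∑ i ∈ range (f.natDegree + 1), C (f.coeff i) * (X ^ i - C r ^ i) := by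
    rw [eval_eq_sum_range]
    nth_rw 1 [f.as_sum_range_C_mul_X_pow]
    simp only [map_sum, map_mul, map_pow, mul_sub, sum_sub_distrib]
  rw [hf, sum_range_succ', divDiff, mul_sum]
  simp only [pow_zero, sub_self, mul_zero, add_zero]
  refine sum_congr rfl fun m _ => ?_
  rw [mul_left_comm, ← geom_sum₂_mul X (C r) (m + 1), geom_sum₂_comm, mul_comm _ (X - C r)]
  simp

end Polynomial

theorem eval_seqResidue {F : Type*} [Field F] (f : F[X]) (s : ℕ → F) (r : F) :
    (seqResidue f s).eval r =
      ∑ m ∈ range f.natDegree, ∑ k ∈ range (m + 1), f.coeff (m + 1) * s (m - k) * r ^ k := by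
  simp only [seqResidue, eval_finsetSum, eval_mul, eval_C, eval_pow, eval_X, sum_mul]
  rw [← sum_range_diag_flip f.natDegree fun k i => f.coeff (k + 1 + i) * s i * r ^ k]
  refine sum_congr rfl fun m _ => sum_congr rfl fun k hk => ?_
  rw [mem_range] at hk
  rw [show k + 1 + (m - k) = m + 1 by omega]

section Semiring

variable {F R : Type*} [Field F] [Semiring R] [Algebra F R] (φ : R →ₗ[F] F) (a : R)

theorem map_pow_mul_aeval (g : F[X]) (i : ℕ) :
    φ (a ^ i * aeval a g) = ∑ j ∈ range (g.natDegree + 1), g.coeff j * φ (a ^ (i + j)) := by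
  simp [aeval_eq_sum_range, mul_sum, pow_add]

theorem annihilatesSeq_iff_forall_map_aeval_mul {g : F[X]} :
    AnnihilatesSeq g (fun i => φ (a ^ i)) ↔ ∀ q : F[X], φ (aeval a (q * g)) = 0 := by
  refine ⟨fun h q => ?_, fun h i => ?_⟩
  · induction q using Polynomial.induction_on' with
    | add p q hp hq => rw [add_mul, map_add, map_add, hp, hq, add_zero]
    | monomial n c =>
      rw [map_mul, aeval_monomial, mul_assoc, ← Algebra.smul_def, map_smul, map_pow_mul_aeval,
        h n, smul_zero]
  · simpa [map_pow_mul_aeval] using h (X ^ i)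

theorem map_aeval_divDiff (f : F[X]) (r : F) :
    φ (aeval a (f.divDiff r)) = (seqResidue f fun i => φ (a ^ i)).eval r := by
  rw [eval_seqResidue]
  simp only [divDiff, map_sum, map_mul, map_pow, aeval_C, aeval_X, mul_sum,
    Algebra.algebraMap_eq_smul_one, _root_.smul_pow, one_pow, smul_mul_assoc, one_mul, smul_smul,
    map_smul, smul_eq_mul]
  refine sum_congr rfl fun m _ => sum_congr rfl fun k _ => by ring

end Semiring

section Ring

variable {F R : Type*} [Field F] [Ring R] [Algebra F R] (φ : R →ₗ[F] F) (a : R)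

theorem IsMinGenPoly.dvd_of_annihilatesSeq {f g : F[X]} (hf : IsMinGenPoly f fun i => φ (a ^ i))
    (hg : AnnihilatesSeq g fun i => φ (a ^ i)) : f ∣ g := by
  obtain ⟨hmonic, hann, hmin⟩ := hf
  rw [annihilatesSeq_iff_forall_map_aeval_mul] at hann hg
  by_contra hdvd
  have hne : g %ₘ f ≠ 0 := mt (modByMonic_eq_zero_iff_dvd hmonic).mp hdvd
  set c := (g %ₘ f).leadingCoeff⁻¹
  have hrem : AnnihilatesSeq (g %ₘ f * C c) fun i => φ (a ^ i) := by
    refine (annihilatesSeq_iff_forall_map_aeval_mul φ a).2 fun q => ?_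
    rw [show q * (g %ₘ f * C c) = q * C c * g - q * C c * (g /ₘ f) * f by
        rw [modByMonic_eq_sub_mul_div]; ring,
      map_sub, map_sub, hg, hann, sub_zero]
  have hle := hmin _ (monic_mul_leadingCoeff_inv hne) hrem
  rw [natDegree_mul_leadingCoeff_inv _ hne] at hle
  exact (natDegree_lt_natDegree hne (degree_modByMonic_lt g hmonic)).not_ge hle

theorem IsMinGenPoly.dvd_minpoly {f : F[X]} (hf : IsMinGenPoly f fun i => φ (a ^ i)) :
    f ∣ minpoly F a :=
  hf.dvd_of_annihilatesSeq φ a <|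
    (annihilatesSeq_iff_forall_map_aeval_mul φ a).2 fun q => by simp

theorem exists_algebraMap_sub_mul_aeval_eq_one {p : F[X]} (hp : aeval a p = 0) {r : F}
    (hr : p.eval r ≠ 0) : ∃ q : F[X], (algebraMap F R r - a) * aeval a q = 1 := by
  obtain ⟨w, hw⟩ := X_sub_C_dvd_sub_C_eval (a := r) (p := p)
  have hC : C (p.eval r)⁻¹ * C (p.eval r) = 1 := by rw [← C_mul, inv_mul_cancel₀ hr, C_1]
  have hinv : (C r - X) * (C (p.eval r)⁻¹ * w) = 1 - C (p.eval r)⁻¹ * p := by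
    linear_combination C (p.eval r)⁻¹ * hw + hC
  refine ⟨C (p.eval r)⁻¹ * w, ?_⟩
  simpa only [map_mul, map_sub, aeval_C, aeval_X, map_one, hp, mul_zero, sub_zero]
    using congrArg (aeval a) hinv

theorem map_aeval_mul_eval_eq_eval_seqResidue {f : F[X]}
    (hf : AnnihilatesSeq f fun i => φ (a ^ i)) {r : F} {q : F[X]}
    (hq : (algebraMap F R r - a) * aeval a q = 1) :
    φ (aeval a q) * f.eval r = (seqResidue f fun i => φ (a ^ i)).eval r := by
  have hsplit : C (f.eval r) * q = q * f + (C r - X) * q * f.divDiff r := by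
    linear_combination q * X_sub_C_mul_divDiff f r
  have hq' : aeval a ((C r - X) * q) = 1 := by simpa using hq
  have hann := (annihilatesSeq_iff_forall_map_aeval_mul φ a).1 hf
  rw [mul_comm, ← smul_eq_mul, ← map_smul, Algebra.smul_def, ← aeval_C, ← map_mul, hsplit,
    map_add, map_add, hann q, zero_add, map_mul (aeval a) ((C r - X) * q), hq', one_mul,
    map_aeval_divDiff]

end Ring

def Matrix.dotProductMulVecₗ {ι K : Type*} [Fintype ι] [CommSemiring K] (u v : ι → K) :
    Matrix ι ι K →ₗ[K] K where
  toFun M := u ⬝ᵥ M *ᵥ v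
  map_add' M N := by rw [add_mulVec, dotProduct_add]
  map_smul' c M := by rw [smul_mulVec, dotProduct_smul, RingHom.id_apply]

/-- For every `r` with `f^A(r) ≠ 0` (`f^A` the minimal polynomial of `A`),
the matrix `r I_n − A` is invertible, `f_u^{A,v}(r) ≠ 0`, and
`u^T (r I_n − A)^{−1} v = ρ_u^{A,v}(r) / f_u^{A,v}(r)`. -/
theorem dot_inv_eq_residue_div (F : Type*) [Field F] (n : ℕ)
    (A : Matrix (Fin n) (Fin n) F) (u v : Fin n → F) (f : Polynomial F)
    (hf : IsMinGenPoly f fun i => u ⬝ᵥ (A ^ i).mulVec v)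
    (r : F) (hr : (minpoly F A).eval r ≠ 0) :
    IsUnit (r • (1 : Matrix (Fin n) (Fin n) F) - A) ∧
    f.eval r ≠ 0 ∧
    u ⬝ᵥ (r • (1 : Matrix (Fin n) (Fin n) F) - A)⁻¹.mulVec v =
      (seqResidue f fun i => u ⬝ᵥ (A ^ i).mulVec v).eval r / f.eval r := by
  rw [← Algebra.algebraMap_eq_smul_one]
  obtain ⟨q, hq⟩ := exists_algebraMap_sub_mul_aeval_eq_one A (minpoly.aeval F A) hr
  have hfr : f.eval r ≠ 0 := fun h =>
    hr (eval_eq_zero_of_dvd_of_eval_eq_zero (hf.dvd_minpoly (dotProductMulVecₗ u v) A) h)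
  refine ⟨IsUnit.of_mul_eq_one _ hq, hfr, ?_⟩
  rw [eq_div_iff hfr, inv_eq_right_inv hq]
  exact map_aeval_mul_eval_eq_eval_seqResidue (dotProductMulVecₗ u v) A hf.2.1 hq
end

section
/- Let F be a field and let (s_i)_{i≥0} be a sequence in F satisfying a linear recurrence, whose minimal generating polynomial has degree exactly n. Then the n×n Hankel matrix H_n = [s_{i+j}]_{0≤i,j≤n−1} is non-singular. -/
/-- If a linearly recurrent sequence `(s_i)_{i≥0}` has minimal generating
polynomial of degree exactly `n`, then the `n×n` Hankel matrix
`H_n = [s_{i+j}]_{0≤i,j≤n−1}` is non-singular. -/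
theorem hankel_det_ne_zero_of_minGenPoly_degree (F : Type*) [Field F] (n : ℕ)
    (s : ℕ → F) (f : Polynomial F) (hf : IsMinGenPoly f s) (hdeg : f.natDegree = n) :
    (Matrix.of fun i j : Fin n => s ((i : ℕ) + (j : ℕ))).det ≠ 0 := by
  intro hdet
  obtain ⟨c, hc0, hc⟩ := (Matrix.exists_mulVec_eq_zero_iff).2 hdet
  set cc : ℕ → F := fun j => if h : j < n then c ⟨j, h⟩ else 0 with hccdef
  set t : ℕ → F := fun i => ∑ j ∈ Finset.range n, cc j * s (i + j) with htdef
  -- t vanishes on indices < n, from the kernel vector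
  have ht0 : ∀ i, i < n → t i = 0 := by
    intro i hi
    have h1 := congrFun hc ⟨i, hi⟩
    simp only [Matrix.mulVec, dotProduct, Matrix.of_apply, Pi.zero_apply] at h1
    rw [htdef]
    simp only []
    rw [Finset.sum_range]
    rw [← h1]
    refine Finset.sum_congr rfl fun j _ => ?_
    simp [hccdef, j.isLt, mul_comm]
  -- the linear recurrence from f
  have hfn : f.coeff n = 1 := by rw [← hdeg]; exact hf.1.coeff_natDegree
  have hrec : ∀ k, s (k + n) = -∑ l ∈ Finset.range n, f.coeff l * s (k + l) := by
    intro k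
    have h2 := hf.2.1 k
    rw [hdeg, Finset.sum_range_succ, hfn, one_mul] at h2
    rw [add_comm] at h2
    exact eq_neg_of_add_eq_zero_left h2
  -- t vanishes everywhere, by strong induction
  have ht : ∀ i, t i = 0 := by
    intro i
    induction i using Nat.strong_induction_on with
    | _ i ih =>
      by_cases hi : i < n
      · exact ht0 i hi
      · push_neg at hi
        obtain ⟨k, rfl⟩ : ∃ k, i = k + n := ⟨i - n, (Nat.sub_add_cancel hi).symm⟩
        have key : t (k + n) = -∑ l ∈ Finset.range n, f.coeff l * t (k + l) := by
          rw [htdef]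
          simp only []
          calc ∑ j ∈ Finset.range n, cc j * s (k + n + j)
              = ∑ j ∈ Finset.range n, cc j * s ((k + j) + n) := by
                refine Finset.sum_congr rfl fun j _ => ?_
                rw [show k + n + j = (k + j) + n by omega]
            _ = ∑ j ∈ Finset.range n, cc j *
                  (-∑ l ∈ Finset.range n, f.coeff l * s ((k + j) + l)) := by
                refine Finset.sum_congr rfl fun j _ => by rw [hrec]
            _ = -∑ j ∈ Finset.range n, ∑ l ∈ Finset.range n,
                  cc j * (f.coeff l * s ((k + j) + l)) := by
                rw [← Finset.sum_neg_distrib]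
                refine Finset.sum_congr rfl fun j _ => ?_
                rw [mul_neg, Finset.mul_sum]
            _ = -∑ l ∈ Finset.range n, f.coeff l *
                  ∑ j ∈ Finset.range n, cc j * s ((k + l) + j) := by
                rw [Finset.sum_comm]
                congr 1
                refine Finset.sum_congr rfl fun l _ => ?_
                rw [Finset.mul_sum]
                refine Finset.sum_congr rfl fun j _ => ?_
                rw [show (k + j) + l = (k + l) + j by omega]
                ring
        rw [key]
        have : ∀ l ∈ Finset.range n, f.coeff l * t (k + l) = 0 := by
          intro l hl
          rw [ih (k + l) (by have := Finset.mem_range.mp hl; omega), mul_zero]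
        rw [Finset.sum_congr rfl this, Finset.sum_const_zero, neg_zero]
  -- build the polynomial g from the kernel vector
  obtain ⟨j0, hj0⟩ := Function.ne_iff.mp hc0
  set g : Polynomial F := ∑ j ∈ Finset.range n, Polynomial.C (cc j) * Polynomial.X ^ j
    with hgdef
  have hgcoeff : ∀ k, g.coeff k = cc k := by
    intro k
    rw [hgdef, Polynomial.finset_sum_coeff]
    simp only [Polynomial.coeff_C_mul, Polynomial.coeff_X_pow, mul_ite, mul_one, mul_zero]
    by_cases hk : k < n
    · rw [Finset.sum_ite_eq (Finset.range n) k cc, if_pos (Finset.mem_range.mpr hk)]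
    · rw [Finset.sum_ite_eq (Finset.range n) k cc, if_neg (by simp [hk]), hccdef]
      simp [hk]
  have hg0 : g ≠ 0 := by
    intro h
    apply hj0
    have := hgcoeff j0
    rw [h, Polynomial.coeff_zero, hccdef] at this
    simpa [j0.isLt] using this.symm
  set lc : F := g.leadingCoeff with hlcdef
  have hlc : lc ≠ 0 := Polynomial.leadingCoeff_ne_zero.mpr hg0
  set h : Polynomial F := g * Polynomial.C lc⁻¹ with hhdef
  have hmonic : h.Monic := Polynomial.monic_mul_leadingCoeff_inv hg0
  have hhcoeff : ∀ k, h.coeff k = cc k * lc⁻¹ := by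
    intro k
    rw [hhdef, Polynomial.coeff_mul_C, hgcoeff]
  have hhne : h ≠ 0 := hmonic.ne_zero
  have hdn : h.natDegree < n := by
    rw [Polynomial.natDegree_lt_iff_degree_lt hhne]
    rw [Polynomial.degree_lt_iff_coeff_zero]
    intro m hm
    have hmn : n ≤ m := by exact_mod_cast hm
    rw [hhcoeff, hccdef]
    simp [Nat.not_lt.mpr hmn]
  have hann : AnnihilatesSeq h s := by
    intro i
    have hsub : ∑ j ∈ Finset.range (h.natDegree + 1), h.coeff j * s (i + j)
        = ∑ j ∈ Finset.range n, h.coeff j * s (i + j) := by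
      refine Finset.sum_subset (Finset.range_subset_range.2 hdn) fun j hj hj' => ?_
      have : h.natDegree < j := by
        simp only [Finset.mem_range] at hj hj'
        omega
      rw [Polynomial.coeff_eq_zero_of_natDegree_lt this, zero_mul]
    rw [hsub]
    have : ∑ j ∈ Finset.range n, h.coeff j * s (i + j) = lc⁻¹ * t i := by
      rw [htdef]
      simp only []
      rw [Finset.mul_sum]
      refine Finset.sum_congr rfl fun j _ => ?_
      rw [hhcoeff]
      ring
    rw [this, ht i, mul_zero]
  have := hf.2.2 h hmonic hann
  omega
end
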